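/- arXiv:2004.10278 — 4 statements merged into one kernel-verified Lean document; each statement's English description precedes it below -/
import Mathlib

section
/- If p is a prime with p ≡ ±3 (mod 8) and n ≥ 2, then x^(2^n) + 1 factors over 𝔽_p as a product of exactly 2 irreducible polynomials, each of degree 2^(n-1). -/
open Polynomial

lemma keyNat (p : ℕ) (hmod : p % 8 = 3 ∨ p % 8 = 5) (j : ℕ) :
    ∃ u, Odd u ∧ p ^ 2 ^ (j+1) = 1 + 2^(j+3) * u := by
  induction j with
  | zero =>
    obtain h | h := hmod
    · obtain ⟨k, rfl⟩ : ∃ k, p = 8*k + 3 := ⟨p/8, by omega⟩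
      exact ⟨8*k^2 + 6*k + 1, ⟨4*k^2+3*k, by ring⟩, by norm_num; ring⟩
    · obtain ⟨k, rfl⟩ : ∃ k, p = 8*k + 5 := ⟨p/8, by omega⟩
      exact ⟨8*k^2 + 10*k + 3, ⟨4*k^2+5*k+1, by ring⟩, by norm_num; ring⟩
  | succ j ih =>
    obtain ⟨u, ⟨v, hv⟩, h⟩ := ih
    refine ⟨u + 2^(j+2)*u^2, ⟨v + 2^(j+1)*u^2, by rw [hv]; ring⟩, ?_⟩
    have : p ^ 2 ^ (j+1+1) = (p ^ 2 ^ (j+1))^2 := by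
      rw [← pow_mul, ← pow_succ]
    rw [this, h]; ring

lemma castOne (p N e : ℕ) (h : N ∣ p ^ e - 1) (hp : 1 ≤ p) :
    ((p : ZMod N)) ^ e = 1 := by
  obtain ⟨t, ht⟩ := h
  have h1 : 1 ≤ p ^ e := Nat.one_le_pow _ _ hp
  have : p ^ e = 1 + N * t := by omega
  have := congrArg (Nat.cast : ℕ → ZMod N) this
  push_cast at this
  rw [ZMod.natCast_self] at this
  simpa using this

lemma orderLemma (p : ℕ) (hp : p.Prime) (hmod : p % 8 = 3 ∨ p % 8 = 5) (n : ℕ) (hn : 2 ≤ n)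
    (d : ℕ) (hdvd : 2^(n+1) ∣ p^d - 1) : 2^(n-1) ∣ d := by
  set M := ZMod (2^(n+1))
  have hp1 : 1 ≤ p := hp.one_lt.le
  have h3 : (p : M) ^ d = 1 := castOne p _ d hdvd hp1
  have h1 : (p : M) ^ 2 ^ (n-1) = 1 := by
    obtain ⟨u, _, hu⟩ := keyNat p hmod (n-2)
    have e1 : n - 2 + 1 = n - 1 := by omega
    have e2 : n - 2 + 3 = n + 1 := by omega
    rw [e1, e2] at hu
    have := congrArg (Nat.cast : ℕ → M) hu
    push_cast at this
    rw [Nat.cast_mul, ZMod.natCast_self] at this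
    simpa using this
  have h2 : ¬ (p : M) ^ 2 ^ (n-2) = 1 := by
    intro hc
    have hcast : ((p ^ 2 ^ (n-2) : ℕ) : M) = ((1 : ℕ) : M) := by push_cast; simpa using hc
    have hmodeq : p ^ 2 ^ (n-2) ≡ 1 [MOD 2^(n+1)] := (ZMod.natCast_eq_natCast_iff _ _ _).mp hcast
    have hdv : 2^(n+1) ∣ p ^ 2 ^ (n-2) - 1 :=
      (Nat.modEq_iff_dvd' (Nat.one_le_pow _ _ hp1)).mp hmodeq.symm
    rcases Nat.lt_or_ge n 3 with h | h
    · have hn2 : n = 2 := by omega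
      rw [show (2:ℕ)^(n+1) = 8 by rw [hn2]; norm_num, show (2:ℕ)^(n-2) = 1 by rw [hn2]; norm_num, pow_one] at hdv
      omega
    · obtain ⟨u, hodd, hu⟩ := keyNat p hmod (n-3)
      obtain ⟨v, rfl⟩ := hodd
      have e1 : n - 3 + 1 = n - 2 := by omega
      have e2 : n - 3 + 3 = n := by omega
      rw [e1, e2] at hu
      rw [hu] at hdv
      simp only [Nat.add_sub_cancel_left] at hdv
      rw [pow_succ] at hdv
      have h2u := (Nat.mul_dvd_mul_iff_left (pow_pos (by norm_num : (0:ℕ) < 2) n)).mp hdv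
      omega
  haveI : Fact (Nat.Prime 2) := ⟨Nat.prime_two⟩
  have horder : orderOf ((p : M)) = 2 ^ (n-1) := by
    have := orderOf_eq_prime_pow (x := (p:M)) (p := 2) (n := n-2) h2 (by
      rw [show n - 2 + 1 = n - 1 by omega]; exact h1)
    rw [show n - 2 + 1 = n - 1 by omega] at this
    exact this
  exact horder ▸ orderOf_dvd_of_pow_eq_one h3

lemma degA (p : ℕ) [hp : Fact p.Prime] (hmod : p % 8 = 3 ∨ p % 8 = 5) (n : ℕ) (hn : 2 ≤ n)
    (q : (ZMod p)[X]) (hq : Irreducible q) (hdvd : q ∣ X^(2^n) + 1) :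
    q.natDegree = 2^(n-1) := by
  haveI : Fact (Irreducible q) := ⟨hq⟩
  haveI : Fact (2 < p) := ⟨by have := hp.out.two_le; omega⟩
  have hp2 : p ≠ 2 := by omega
  set K := AdjoinRoot q with hK
  have hq0 : q ≠ 0 := hq.ne_zero
  let pb := AdjoinRoot.powerBasis hq0
  haveI : Module.Finite (ZMod p) K := pb.finite
  haveI : Finite K := Module.finite_of_finite (ZMod p)
  haveI : Fintype K := Fintype.ofFinite K
  set d := q.natDegree with hd
  have hdpos : 0 < d := hq.natDegree_pos
  have hcard : Fintype.card K = p ^ d := by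
    rw [Module.card_eq_pow_finrank (K := ZMod p) (V := K), ZMod.card, pb.finrank,
      AdjoinRoot.powerBasis_dim]
  haveI : CharP K p := charP_of_injective_algebraMap (algebraMap (ZMod p) K).injective p
  set α := AdjoinRoot.root q with hα
  have hroot : α ^ 2 ^ n = -1 := by
    have h0 : (AdjoinRoot.mk q) (X^(2^n) + 1) = 0 := AdjoinRoot.mk_eq_zero.mpr hdvd
    have : α ^ 2 ^ n + 1 = 0 := by simpa using h0
    linear_combination this
  have hneg : (-1 : K) ≠ 1 := CharP.neg_one_ne_one K p
  have hα0 : α ≠ 0 := by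
    intro h
    rw [h, zero_pow (by positivity)] at hroot
    exact one_ne_zero (neg_eq_zero.mp hroot.symm)
  haveI : Fact (Nat.Prime 2) := ⟨Nat.prime_two⟩
  have horder : orderOf α = 2 ^ (n + 1) := by
    refine orderOf_eq_prime_pow ?_ ?_
    · rw [hroot]; exact hneg
    · rw [pow_succ, pow_mul, hroot]; norm_num
  -- 2^(n+1) ∣ p^d - 1
  have hdvd1 : 2 ^ (n+1) ∣ p ^ d - 1 := by
    have := orderOf_dvd_card (x := Units.mk0 α hα0)
    rw [← orderOf_units, Units.val_mk0, horder] at this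
    rwa [Fintype.card_units, hcard] at this
  have hlow : 2 ^ (n-1) ∣ d := orderLemma p hp.out hmod n hn d hdvd1
  -- upper bound
  have hup : d ≤ 2 ^ (n-1) := by
    set e := 2 ^ (n-1) with he
    obtain ⟨u, -, hpe⟩ := keyNat p hmod (n-2)
    rw [show n - 2 + 1 = n - 1 by omega, show n - 2 + 3 = n + 1 by omega, ← he] at hpe
    have hone : α ^ 2 ^ (n+1) = 1 := by rw [← horder]; exact pow_orderOf_eq_one α
    have hαpow : α ^ p ^ e = α := by
      rw [hpe, pow_add, pow_one, pow_mul, hone, one_pow, mul_one]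
    -- build the AlgHom
    have hfix : ∀ x : K, x ^ p ^ e = x := by
      let ψ : K →ₐ[ZMod p] K :=
        { toRingHom := iterateFrobenius K p e
          commutes' := fun r => by
            simp [iterateFrobenius_def, ← map_pow, ZMod.pow_card_pow] }
      have hψ : ψ = AlgHom.id (ZMod p) K := by
        apply AdjoinRoot.algHom_ext
        show α ^ p ^ e = α
        exact hαpow
      intro x
      have := congrArg (fun f => f x) hψ
      simpa [ψ, iterateFrobenius_def] using this
    obtain ⟨g, hg⟩ := IsCyclic.exists_generator (α := Kˣ)
    have hgord : orderOf g = p ^ d - 1 := by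
      rw [orderOf_eq_card_of_forall_mem_zpowers hg, Nat.card_eq_fintype_card,
        Fintype.card_units, hcard]
    have hg1 : g ^ (p ^ e - 1) = 1 := by
      have h1 : (g : K) ^ p ^ e = g := hfix g
      have hpe1 : 1 ≤ p ^ e := Nat.one_le_pow _ _ hp.out.pos
      have hval : (g : K) ^ (p ^ e - 1) = 1 := by
        apply mul_right_cancel₀ (Units.ne_zero g)
        rw [← pow_succ, Nat.sub_add_cancel hpe1, h1, one_mul]
      rw [← Units.val_eq_one, Units.val_pow_eq_pow_val]
      exact hval
    have hdd : p ^ d - 1 ∣ p ^ e - 1 := hgord ▸ orderOf_dvd_of_pow_eq_one hg1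
    have hle : p ^ d - 1 ≤ p ^ e - 1 := Nat.le_of_dvd (by
      have : 2 ≤ p := hp.out.two_le
      have : 2 ≤ p ^ e := le_trans this (Nat.le_self_pow (by positivity) p)
      omega) hdd
    have : p ^ d ≤ p ^ e := by
      have h1 : 1 ≤ p ^ d := Nat.one_le_pow _ _ hp.out.pos
      omega
    exact (Nat.pow_le_pow_iff_right hp.out.one_lt).mp this
  have : 2 ^ (n-1) ≤ d := Nat.le_of_dvd hdpos hlow
  omega

lemma irredB (p : ℕ) [hp : Fact p.Prime] (hmod : p % 8 = 3 ∨ p % 8 = 5) (n : ℕ) (hn : 2 ≤ n)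
    (q : (ZMod p)[X]) (hq0 : q ≠ 0) (hdeg : q.natDegree = 2^(n-1)) (hdvd : q ∣ X^(2^n) + 1) :
    Irreducible q := by
  have hnu : ¬ IsUnit q := by
    intro h
    have := natDegree_eq_zero_of_isUnit h
    rw [hdeg] at this
    exact (pow_ne_zero _ two_ne_zero) this
  obtain ⟨r, hr, hrdvd⟩ := WfDvdMonoid.exists_irreducible_factor hnu hq0
  have hrdeg : r.natDegree = 2^(n-1) := degA p hmod n hn r hr (hrdvd.trans hdvd)
  obtain ⟨c, hc⟩ := hrdvd
  have hc0 : c ≠ 0 := by rintro rfl; rw [mul_zero] at hc; exact hq0 hc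
  have : q.natDegree = r.natDegree + c.natDegree := by rw [hc, natDegree_mul hr.ne_zero hc0]
  have hcdeg : c.natDegree = 0 := by omega
  have hcu : IsUnit c := by
    rw [eq_C_of_natDegree_eq_zero hcdeg]
    exact isUnit_C.mpr (isUnit_iff_ne_zero.mpr (by
      intro h0
      apply hc0
      rw [eq_C_of_natDegree_eq_zero hcdeg, h0, map_zero]))
  exact (Associated.irreducible ⟨hcu.unit, by rw [IsUnit.unit_spec, ← hc]⟩ hr)

/-- If `p` is a prime with `p ≡ ±3 (mod 8)` and `n ≥ 2`, then `x^(2^n)+1` factors over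
`𝔽_p` as a product of exactly two distinct irreducible polynomials, each of degree `2^(n-1)`. -/
theorem stmt_2 (p : ℕ) [hp : Fact p.Prime] (hmod : p % 8 = 3 ∨ p % 8 = 5) (n : ℕ) (hn : 2 ≤ n) :
    ∃ f g : (ZMod p)[X], Irreducible f ∧ Irreducible g ∧ f ≠ g ∧
      f.natDegree = 2 ^ (n - 1) ∧ g.natDegree = 2 ^ (n - 1) ∧
      (X ^ (2 ^ n) + 1 : (ZMod p)[X]) = f * g := by
  have hp3 : 2 < p := by have := hp.out.two_le; rcases hmod with h | h <;> omega
  have h2ne : (2 : ZMod p) ≠ 0 := by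
    intro h
    have hdvd2 : (p : ℕ) ∣ 2 := (ZMod.natCast_eq_zero_iff 2 p).mp (by exact_mod_cast h)
    have := Nat.le_of_dvd (by norm_num) hdvd2
    omega
  rcases hmod with h3 | h5
  · -- p ≡ 3 mod 8, trinomials
    obtain ⟨δ, hδ⟩ : IsSquare (-2 : ZMod p) :=
      (ZMod.exists_sq_eq_neg_two_iff (by omega)).mpr (Or.inr h3)
    have hm1 : 1 ≤ 2 ^ (n-2) := Nat.one_le_pow _ _ (by norm_num)
    have hmn : 2 ^ (n-2) * 4 = 2 ^ n := by
      calc 2 ^ (n-2) * 4 = 2 ^ (n-2) * 2 ^ 2 := by norm_num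
      _ = 2 ^ (n-2+2) := (pow_add 2 (n-2) 2).symm
      _ = 2 ^ n := by congr 1; omega
    have hm2 : 2 ^ (n-2) * 2 = 2 ^ (n-1) := by
      calc 2 ^ (n-2) * 2 = 2 ^ (n-2) * 2 ^ 1 := by norm_num
      _ = 2 ^ (n-2+1) := (pow_add 2 (n-2) 1).symm
      _ = 2 ^ (n-1) := by congr 1; omega
    have hδ0 : δ ≠ 0 := by
      intro h; rw [h, mul_zero] at hδ
      exact h2ne (neg_eq_zero.mp hδ)
    obtain ⟨m, hm1, hmn, hm2⟩ : ∃ m : ℕ, 1 ≤ m ∧ m * 4 = 2 ^ n ∧ m * 2 = 2 ^ (n-1) :=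
      ⟨2 ^ (n-2), hm1, hmn, hm2⟩
    set f : (ZMod p)[X] := X ^ (m*2) + C δ * X ^ m - 1 with hf
    set g : (ZMod p)[X] := X ^ (m*2) - C δ * X ^ m - 1 with hg
    have hCδ : C δ * C δ = -2 := by
      rw [← C_mul, ← hδ, map_neg, map_ofNat]
    have hprod : (X ^ (2^n) + 1 : (ZMod p)[X]) = f * g := by
      rw [hf, hg, ← hmn]
      have : (X ^ (m*2) + C δ * X ^ m - 1) * (X ^ (m*2) - C δ * X ^ m - 1)
          = X ^ (m*4) + (- (C δ * C δ) - 2) * X ^ (m*2) + 1 := by ring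
      rw [this, hCδ]
      ring
    have hfdeg : f.natDegree = m * 2 := by
      rw [hf]; compute_degree! <;> (first | omega | (split_ifs with h1 h2 <;> (first | (exfalso; omega) | norm_num)))
    have hgdeg : g.natDegree = m * 2 := by
      rw [hg]; compute_degree! <;> (first | omega | (split_ifs with h1 h2 <;> (first | (exfalso; omega) | norm_num)))
    have hfg : f ≠ g := by
      intro h
      have hsub : (C δ + C δ) * X ^ m = 0 := by
        rw [← sub_eq_zero] at h
        rw [← h, hf, hg]; ring
      rcases mul_eq_zero.mp hsub with h0 | h0
      · rw [← C_add, C_eq_zero] at h0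
        have : (2 : ZMod p) * δ = 0 := by linear_combination h0
        rcases mul_eq_zero.mp this with h1 | h1
        · exact h2ne h1
        · exact hδ0 h1
      · exact pow_ne_zero m X_ne_zero h0
    have hf0 : f ≠ 0 := by
      intro h; rw [h] at hfdeg; simp only [natDegree_zero] at hfdeg; omega
    have hg0 : g ≠ 0 := by
      intro h; rw [h] at hgdeg; simp only [natDegree_zero] at hgdeg; omega
    exact ⟨f, g, irredB p (Or.inl h3) n hn f hf0 (by rw [hfdeg, hm2]) ⟨g, hprod⟩,
      irredB p (Or.inl h3) n hn g hg0 (by rw [hgdeg, hm2]) ⟨f, by rw [hprod]; ring⟩,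
      hfg, by rw [hfdeg, hm2], by rw [hgdeg, hm2], hprod⟩
  · -- p ≡ 5 mod 8, binomials
    obtain ⟨u, hu⟩ : IsSquare (-1 : ZMod p) :=
      (ZMod.exists_sq_eq_neg_one_iff).mpr (by omega)
    have he1' : 1 ≤ 2 ^ (n-1) := Nat.one_le_pow _ _ (by norm_num)
    have hen' : 2 ^ (n-1) * 2 = 2 ^ n := by
      calc 2 ^ (n-1) * 2 = 2 ^ (n-1) * 2 ^ 1 := by norm_num
      _ = 2 ^ (n-1+1) := (pow_add 2 (n-1) 1).symm
      _ = 2 ^ n := by congr 1; omega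
    obtain ⟨e, hee, he1, hen⟩ : ∃ e : ℕ, e = 2 ^ (n-1) ∧ 1 ≤ e ∧ e * 2 = 2 ^ n :=
      ⟨2 ^ (n-1), rfl, he1', hen'⟩
    have hu0 : u ≠ 0 := by
      intro h; rw [h, mul_zero] at hu
      exact one_ne_zero (neg_eq_zero.mp hu)
    set f : (ZMod p)[X] := X ^ e + C u with hf
    set g : (ZMod p)[X] := X ^ e - C u with hg
    have hCu : C u * C u = -1 := by rw [← C_mul, ← hu]; simp
    have hprod : (X ^ (2^n) + 1 : (ZMod p)[X]) = f * g := by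
      rw [hf, hg, ← hen]
      have : (X ^ e + C u) * (X ^ e - C u) = X ^ (e*2) - C u * C u := by ring
      rw [this, hCu]
      ring
    have hfdeg : f.natDegree = e := by rw [hf]; compute_degree! <;> (first | omega | (split_ifs with h1 h2 <;> (first | (exfalso; omega) | norm_num)))
    have hgdeg : g.natDegree = e := by rw [hg]; compute_degree! <;> (first | omega | (split_ifs with h1 h2 <;> (first | (exfalso; omega) | norm_num)))
    have hfg : f ≠ g := by
      intro h
      have hsub : C u + C u = (0 : (ZMod p)[X]) := by
        rw [← sub_eq_zero] at h
        rw [← h, hf, hg]; ring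
      rw [← C_add, C_eq_zero] at hsub
      have : (2 : ZMod p) * u = 0 := by linear_combination hsub
      rcases mul_eq_zero.mp this with h1 | h1
      · exact h2ne h1
      · exact hu0 h1
    have hf0 : f ≠ 0 := by intro h; rw [h] at hfdeg; simp only [natDegree_zero] at hfdeg; omega
    have hg0 : g ≠ 0 := by intro h; rw [h] at hgdeg; simp only [natDegree_zero] at hgdeg; omega
    exact ⟨f, g, irredB p (Or.inr h5) n hn f hf0 (hfdeg.trans hee) ⟨g, hprod⟩,
      irredB p (Or.inr h5) n hn g hg0 (hgdeg.trans hee) ⟨f, by rw [hprod]; ring⟩,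
      hfg, hfdeg.trans hee, hgdeg.trans hee, hprod⟩
end

section
/- Let ζ be a primitive 2^(n+1)-th root of unity, p a prime with p ≡ 3 (mod 4), A = ν_2(p+1) with A ≤ n, and δ an integer. The automorphism σ: ζ ↦ ζ^(−2^A−1) of ℚ(ζ) maps the ideal (p, ζ^(2^(n−A+1)) + δζ^(2^(n−A)) − 1) of ℤ[ζ] to itself. -/
private def lucasY (d : ℤ) : ℕ → ℤ
  | 0 => d ^ 2 + 2
  | j + 1 => (lucasY d j) ^ 2 - 2

private lemma lucasY_id {S : Type*} [CommRing S] (d : ℤ) (w : S) (hw : w ^ 2 = 1 - (d : S) * w) :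
    ∀ j : ℕ, ((lucasY d j : ℤ) : S) * w ^ (2 ^ (j + 1)) = w ^ (2 ^ (j + 2)) + 1 := by
  intro j
  induction j with
  | zero =>
      show ((lucasY d 0 : ℤ) : S) * w ^ (2^1) = w ^ (2^2) + 1
      simp only [lucasY]
      push_cast
      linear_combination (-(w^2) + (d:S)*w + 1) * hw
  | succ i ih =>
      show ((lucasY d (i+1) : ℤ) : S) * w ^ (2^(i+2)) = w ^ (2^(i+3)) + 1
      have h1 : w ^ (2^(i+2)) = (w ^ (2^(i+1)))^2 := by
        rw [← pow_mul]; ring_nf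
      have h2 : w ^ (2^(i+3)) = (w ^ (2^(i+1)))^4 := by
        rw [← pow_mul]; ring_nf
      simp only [lucasY]
      push_cast
      rw [h1, h2]
      set a := w ^ (2^(i+1))
      linear_combination (((lucasY d i : ℤ):S)*a + a^2 + 1) * ih

private lemma qr_core (p : ℕ) (hp : p.Prime) (hpmod : p % 4 = 3) (d : ℤ) :
    ¬ (p:ℤ) ∣ d^2 + 4 := by
  intro hdvd
  haveI := Fact.mk hp
  have h1 : ((d : ZMod p))^2 = -4 := by
    have h0 : ((d^2 + 4 : ℤ) : ZMod p) = 0 := by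
      rw [ZMod.intCast_zmod_eq_zero_iff_dvd]; exact_mod_cast hdvd
    push_cast at h0
    linear_combination h0
  have h2ne : (2 : ZMod p) ≠ 0 := by
    have : ((2:ℕ) : ZMod p) ≠ 0 := by
      rw [Ne, ZMod.natCast_eq_zero_iff]
      intro h
      have := Nat.le_of_dvd (by norm_num) h
      omega
    exact_mod_cast this
  have h2 : IsSquare (-1 : ZMod p) := by
    refine ⟨(d : ZMod p) * (2 : ZMod p)⁻¹, ?_⟩
    have hinv : (2 : ZMod p) * (2 : ZMod p)⁻¹ = 1 := mul_inv_cancel₀ h2ne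
    linear_combination (-((2:ZMod p)⁻¹^2)) * h1 + (2*(2:ZMod p)⁻¹+1) * hinv
  rw [ZMod.exists_sq_eq_neg_one_iff] at h2
  exact h2 hpmod

private lemma exists_root (p : ℕ) [hpf : Fact p.Prime] (hodd : p % 2 = 1) (d : ℤ) :
    ∃ x : GaloisField p 2, x ^ 2 + (d : GaloisField p 2) * x - 1 = 0 := by
  haveI : Fintype (GaloisField p 2) := Fintype.ofFinite _
  have hcard : Fintype.card (GaloisField p 2) = p ^ 2 := by
    rw [← Nat.card_eq_fintype_card]; exact GaloisField.card p 2 (by norm_num)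
  have hple := hpf.out.two_le
  have h2ne : (2 : GaloisField p 2) ≠ 0 := by
    have hnd : ¬ (p ∣ 2) := by
      intro h; have := Nat.le_of_dvd (by norm_num) h; omega
    have := (CharP.cast_eq_zero_iff (GaloisField p 2) p 2).not.mpr hnd
    exact_mod_cast this
  have hsq : ∃ s : GaloisField p 2, s ^ 2 = (d : GaloisField p 2) ^ 2 + 4 := by
    set t : ZMod p := ((d ^ 2 + 4 : ℤ) : ZMod p) with ht
    have hcast : ((d ^ 2 + 4 : ℤ) : GaloisField p 2) = algebraMap (ZMod p) (GaloisField p 2) t := by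
      rw [ht, map_intCast]
    by_cases h0 : t = 0
    · refine ⟨0, ?_⟩
      have h1 : ((d ^ 2 + 4 : ℤ) : GaloisField p 2) = 0 := by rw [hcast, h0, map_zero]
      push_cast at h1
      linear_combination -h1
    · have ha : algebraMap (ZMod p) (GaloisField p 2) t ≠ 0 := by
        simpa using (RingHom.injective (algebraMap (ZMod p) (GaloisField p 2))).ne h0
      have hIsSq : IsSquare (algebraMap (ZMod p) (GaloisField p 2) t) := by
        rw [FiniteField.isSquare_iff (by rw [ringChar.eq (GaloisField p 2) p]; omega) ha]
        obtain ⟨m, hm⟩ : ∃ m, p = 2 * m + 1 := ⟨p / 2, by omega⟩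
        have hdiv : Fintype.card (GaloisField p 2) / 2 = (p - 1) * ((p + 1) / 2) := by
          rw [hcard]
          have hp2 : p ^ 2 = 4 * (m ^ 2 + m) + 1 := by rw [hm]; ring
          have hprod : (p - 1) * ((p + 1) / 2) = 2 * (m ^ 2 + m) := by
            rw [hm]
            have h3 : (2 * m + 1 + 1) / 2 = m + 1 := by omega
            rw [h3]
            have h5 : 2 * m + 1 - 1 = 2 * m := by omega
            rw [h5]; ring
          omega
        rw [hdiv, pow_mul, ← map_pow, ZMod.pow_card_sub_one_eq_one h0, map_one, one_pow]
      obtain ⟨s, hs⟩ := hIsSq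
      rw [← sq, ← hcast] at hs
      push_cast at hs
      exact ⟨s, by linear_combination -hs⟩
  obtain ⟨s, hs⟩ := hsq
  refine ⟨(s - (d : GaloisField p 2)) / 2, ?_⟩
  have h4 : (4 : GaloisField p 2) ≠ 0 := by
    intro h
    apply h2ne
    have h22 : (4 : GaloisField p 2) = 2 * 2 := by norm_num
    rw [h22] at h
    rcases mul_eq_zero.mp h with h' | h' <;> exact h'
  field_simp
  linear_combination hs
private lemma field_core (p A : ℕ) (hp : p.Prime) (hpmod : p % 4 = 3)
    (hA : 2 ^ A ∣ p + 1) (d : ℤ) (k : ℕ) (hk : k + 3 ≤ A) :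
    ¬ (p:ℤ) ∣ lucasY d k := by
  intro hdvd
  haveI := Fact.mk hp
  obtain ⟨x, hx⟩ := exists_root p (by omega) d
  have hp3 : 3 ≤ p := by
    have := hp.two_le; omega
  have hone_ne : (1 : GaloisField p 2) ≠ -1 := by
    intro h
    have h2 : (2 : GaloisField p 2) = 0 := by linear_combination h
    have := (CharP.cast_eq_zero_iff (GaloisField p 2) p 2).mp (by exact_mod_cast h2)
    have := Nat.le_of_dvd (by norm_num) this
    omega
  have hx2 : x ^ 2 = 1 - (d : GaloisField p 2) * x := by linear_combination hx
  have hid := lucasY_id d x hx2 k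
  have hyk : ((lucasY d k : ℤ) : GaloisField p 2) = 0 := by
    obtain ⟨t, ht⟩ := hdvd
    rw [ht]
    push_cast
    rw [show ((p:ℕ) : GaloisField p 2) = 0 from CharP.cast_eq_zero _ p, zero_mul]
  rw [hyk, zero_mul] at hid
  have hneg : x ^ (2 ^ (k + 2)) = -1 := by linear_combination -hid
  have hone : x ^ (2 ^ (k + 3)) = 1 := by
    have : (2:ℕ) ^ (k + 3) = 2 ^ (k + 2) * 2 := by ring
    rw [this, pow_mul, hneg]; ring
  have hx0 : x ≠ 0 := by
    intro h
    rw [h] at hx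
    simp at hx
  -- Frobenius dichotomy
  have hroot : (x ^ p) ^ 2 + (d : GaloisField p 2) * (x ^ p) - 1 = 0 := by
    have := congrArg (frobenius (GaloisField p 2) p) hx
    simp only [map_sub, map_add, map_mul, map_pow, map_one, map_intCast, map_zero,
      frobenius_def] at this
    linear_combination this
  have hdich : x ^ p = x ∨ x ^ p = -(x + (d : GaloisField p 2)) := by
    have hfac : (x ^ p - x) * (x ^ p + x + (d : GaloisField p 2)) = 0 := by
      linear_combination hroot - hx + (d : GaloisField p 2) * hx - (d : GaloisField p 2) * hx
    rcases mul_eq_zero.mp hfac with h | h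
    · left; linear_combination h
    · right; linear_combination h
  rcases hdich with hcase | hcase
  · -- split case: x^(p-1) = 1
    have hxp1 : x ^ (p - 1) = 1 := by
      have h1 : x ^ (p - 1) * x = 1 * x := by
        rw [← pow_succ, one_mul]
        have : p - 1 + 1 = p := by omega
        rw [this, hcase]
      exact mul_right_cancel₀ hx0 h1
    have hord1 : orderOf x ∣ p - 1 := orderOf_dvd_of_pow_eq_one hxp1
    have hord2 : orderOf x ∣ 2 ^ (k + 3) := orderOf_dvd_of_pow_eq_one hone
    have hordg : orderOf x ∣ Nat.gcd (p - 1) (2 ^ (k + 3)) := Nat.dvd_gcd hord1 hord2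
    have hgcd : Nat.gcd (p - 1) (2 ^ (k + 3)) ∣ 2 := by
      obtain ⟨i, hile, hig⟩ := (Nat.dvd_prime_pow Nat.prime_two).mp
        (Nat.gcd_dvd_right (p - 1) (2 ^ (k + 3)))
      have hd1 : Nat.gcd (p - 1) (2 ^ (k + 3)) ∣ p - 1 := Nat.gcd_dvd_left _ _
      rw [hig] at hd1 ⊢
      have hi1 : i ≤ 1 := by
        by_contra hcon
        push_neg at hcon
        have : (2:ℕ) ^ 2 ∣ 2 ^ i := pow_dvd_pow 2 hcon
        have h4 : 4 ∣ p - 1 := dvd_trans (by norm_num at this ⊢; exact this) hd1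
        omega
      exact (pow_dvd_pow 2 hi1).trans (by norm_num)
    have hx2one : x ^ 2 = 1 := orderOf_dvd_iff_pow_eq_one.mp (hordg.trans hgcd)
    have : x ^ (2 ^ (k + 2)) = 1 := by
      have he : (2:ℕ) ^ (k + 2) = 2 * 2 ^ (k + 1) := by ring
      rw [he, pow_mul, hx2one, one_pow]
    rw [hneg] at this
    exact hone_ne this.symm
  · -- inert case: x^(p+1) = -1
    have hxp1 : x ^ (p + 1) = -1 := by
      rw [pow_succ, hcase]
      linear_combination -hx
    have hdvd2 : 2 ^ (k + 3) ∣ p + 1 := dvd_trans (pow_dvd_pow 2 hk) hA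
    obtain ⟨m, hm⟩ := hdvd2
    have : x ^ (p + 1) = 1 := by rw [hm, pow_mul, hone, one_pow]
    rw [hxp1] at this
    exact hone_ne this.symm
private lemma dvd_delta (p A : ℕ) (hp : p.Prime) (hpmod : p % 4 = 3)
    (hA : 2 ^ A ∣ p + 1) (d : ℤ) :
    ∀ j, j + 1 ≤ A → (p:ℤ) ∣ lucasY d j - 2 → (p:ℤ) ∣ d := by
  have hpp : Prime (p:ℤ) := Nat.prime_iff_prime_int.mp hp
  intro j
  induction j with
  | zero =>
      intro _ h
      have h2 : (p:ℤ) ∣ d * d := by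
        have : lucasY d 0 - 2 = d * d := by simp [lucasY]; ring
        rwa [this] at h
      rcases hpp.dvd_mul.mp h2 with h' | h' <;> exact h'
  | succ i ih =>
      intro hle h
      have hfac : lucasY d (i+1) - 2 = (lucasY d i - 2) * (lucasY d i + 2) := by
        simp [lucasY]; ring
      rw [hfac] at h
      rcases hpp.dvd_mul.mp h with h1 | h2
      · exact ih (by omega) h1
      · cases i with
        | zero =>
            exfalso
            apply qr_core p hp hpmod d
            have : lucasY d 0 + 2 = d^2 + 4 := by simp [lucasY]; ring
            rwa [this] at h2
        | succ m =>
            exfalso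
            apply field_core p A hp hpmod hA d m (by omega)
            have : lucasY d (m+1) + 2 = (lucasY d m)^2 := by simp [lucasY]
            rw [this] at h2
            exact hpp.dvd_of_dvd_pow h2

private lemma num_core (p A : ℕ) (hp : p.Prime) (hpmod : p % 4 = 3)
    (hA : 2 ^ A ∣ p + 1) (d : ℤ) (hA1 : 1 ≤ A) :
    ∃ a b : ℤ, d * (lucasY d (A-1) + 2) =
      a * p + b * ((lucasY d (A-1))^2 - 4) := by
  set V := lucasY d (A-1) with hV
  have hpp : Prime (p:ℤ) := Nat.prime_iff_prime_int.mp hp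
  by_cases hdvd : (p:ℤ) ∣ V^2 - 4
  · have hfac : V^2 - 4 = (V-2)*(V+2) := by ring
    rw [hfac] at hdvd
    rcases hpp.dvd_mul.mp hdvd with h1 | h2
    · obtain ⟨t, ht⟩ := dvd_delta p A hp hpmod hA d (A-1) (by omega) h1
      exact ⟨t*(V+2), 0, by rw [ht]; ring⟩
    · obtain ⟨t, ht⟩ := h2
      exact ⟨d*t, 0, by rw [ht]; ring⟩
  · have hc : IsCoprime (p:ℤ) (V^2-4) := (Prime.coprime_iff_not_dvd hpp).mpr hdvd
    obtain ⟨a, b, hab⟩ := hc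
    exact ⟨d*(V+2)*a, d*(V+2)*b, by linear_combination (-(d*(V+2))) * hab⟩

/-- Let `ζ` be a primitive `2^(n+1)`-th root of unity (generating the ring `ℤ[ζ]`, here an
arbitrary commutative ring `R` generated over `ℤ` by such a `ζ`), `p ≡ 3 (mod 4)` a prime
with `A = ν₂(p+1) ≤ n`, and `δ` an integer. Any ring automorphism `σ` with
`σ(ζ) = ζ^(-2^A - 1) = ζ^(2^(n+1) - (2^A + 1))` maps the ideal
`(p, ζ^(2^(n-A+1)) + δ ζ^(2^(n-A)) - 1)` to itself. -/
theorem stmt_12 (n A : ℕ) (p : ℕ) (hp : p.Prime) (hpmod : p % 4 = 3)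
    (hA : 2 ^ A ∣ p + 1) (hA' : ¬ 2 ^ (A + 1) ∣ p + 1) (hAn : A ≤ n) (δ : ℤ)
    (R : Type*) [CommRing R] (ζ : R) (hζ : IsPrimitiveRoot ζ (2 ^ (n + 1)))
    (hgen : Algebra.adjoin ℤ {ζ} = ⊤)
    (σ : R ≃+* R) (hσ : σ ζ = ζ ^ (2 ^ (n + 1) - (2 ^ A + 1))) :
    Ideal.map (σ : R →+* R)
        (Ideal.span {(p : R), ζ ^ (2 ^ (n - A + 1)) + (δ : R) * ζ ^ (2 ^ (n - A)) - 1}) =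
      Ideal.span {(p : R), ζ ^ (2 ^ (n - A + 1)) + (δ : R) * ζ ^ (2 ^ (n - A)) - 1} := by
  haveI hpf := Fact.mk hp
  have hA2 : 2 ≤ A := by
    by_contra hcon
    push_neg at hcon
    apply hA'
    have h4 : 4 ∣ p + 1 := by omega
    refine dvd_trans ?_ h4
    calc (2:ℕ)^(A+1) ∣ 2^2 := pow_dvd_pow 2 (by omega)
      _ = 4 := by norm_num
  have hA1 : 1 ≤ A := by omega
  -- the unit ξ with value ζ
  obtain ⟨ξ, hξ⟩ := hζ.isUnit (by positivity)
  have hζN : ζ ^ (2^(n+1)) = 1 := hζ.pow_eq_one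
  have hξN : ξ ^ ((2:ℕ)^(n+1)) = 1 := by
    ext
    push_cast [hξ]
    exact hζN
  set c : ℤ → R := fun e => ((ξ ^ e : Rˣ) : R) with hcdef
  have hcnat : ∀ e : ℕ, c (e:ℤ) = ζ ^ e := by
    intro e
    simp only [hcdef, zpow_natCast, Units.val_pow_eq_pow_val, hξ]
  have hcadd : ∀ a b : ℤ, c (a+b) = c a * c b := by
    intro a b
    simp only [hcdef, zpow_add, Units.val_mul]
  have hcN : ∀ e k : ℤ, c (e + (2:ℤ)^(n+1) * k) = c e := by
    intro e k
    have h1 : ξ ^ ((2:ℤ)^(n+1) * k) = 1 := by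
      rw [zpow_mul]
      have h2 : ((2:ℤ)^(n+1)) = (((2^(n+1) : ℕ)):ℤ) := by push_cast; ring
      rw [h2, zpow_natCast, hξN, one_zpow]
    simp only [hcdef, zpow_add, h1, Units.val_mul, Units.val_one, mul_one]
  -- sigma action
  set Mz : ℤ := (2:ℤ)^(n+1) - 2^A - 1 with hMzdef
  have hpowle : (2:ℕ)^A + 1 ≤ 2^(n+1) := by
    have h1 : (2:ℕ)^A ≤ 2^n := Nat.pow_le_pow_right (by norm_num) hAn
    have h2 : (2:ℕ)^n + 2^n = 2^(n+1) := by rw [pow_succ]; ring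
    have h3 : (1:ℕ) ≤ 2^n := Nat.one_le_two_pow
    omega
  have hMnat : ((2^(n+1) - (2^A + 1) : ℕ) : ℤ) = Mz := by
    rw [hMzdef]
    have := hpowle
    push_cast [Nat.cast_sub (by omega : 2^A + 1 ≤ 2^(n+1))]
    ring
  have hUmap : Units.map ((σ : R →+* R) : R →* R) ξ = ξ ^ Mz := by
    apply Units.ext
    have hR : ((ξ ^ Mz : Rˣ) : R) = ζ ^ (2 ^ (n + 1) - (2 ^ A + 1)) := by
      rw [← hMnat, zpow_natCast, Units.val_pow_eq_pow_val, hξ]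
    rw [hR]
    simpa [Units.coe_map, hξ] using hσ
  have msig : ∀ e : ℤ, σ (c e) = c (Mz * e) := by
    intro e
    have h1 : σ (c e) = ((Units.map ((σ : R →+* R) : R →* R) (ξ ^ e) : Rˣ) : R) := by
      simp only [hcdef]
      rfl
    rw [h1, map_zpow, hUmap, ← zpow_mul]
  -- natural number exponent facts
  have hfu : (2:ℕ)^A * 2^(n-A+1) = 2^(n+1) := by
    rw [← pow_add]; congr 1; omega
  have hfh : (2:ℕ)^A * 2^(n-A) = 2^n := by
    rw [← pow_add]; congr 1; omega
  have hfz : (2:ℕ)^(n-A) * 2^(A+1) = 2^(n+1) := by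
    rw [← pow_add]; congr 1; omega
  have hfh2 : (2:ℕ)^(n-A) * 2^A = 2^n := by
    rw [← pow_add]; congr 1; omega
  have hfuh : (2:ℕ)^(n-A) * 2 = 2^(n-A+1) := by
    rw [pow_succ]
  -- integer exponent facts
  have Fu : (2:ℤ)^A * 2^(n-A+1) = 2^(n+1) := by exact_mod_cast hfu
  have Fh : (2:ℤ)^A * 2^(n-A) = 2^n := by exact_mod_cast hfh
  have F2e : (2:ℤ) * 2^n = 2^(n+1) := by rw [pow_succ]; ring
  have Fuh : (2:ℤ)^(n-A+1) = 2 * 2^(n-A) := by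
    have : (2:ℕ)^(n-A+1) = 2 * 2^(n-A) := by rw [pow_succ]; ring
    exact_mod_cast this
  have FA : (2:ℤ) * 2^(A-1) = 2^A := by
    have : (2:ℕ) * 2^(A-1) = 2^A := by
      rw [mul_comm, ← pow_succ]; congr 1; omega
    exact_mod_cast this
  have E1z : Mz * (2:ℤ)^(n-A+1) =
      -(2:ℤ)^(n-A+1) + (2:ℤ)^(n+1) * ((2:ℤ)^(n-A+1) - 1) := by
    rw [hMzdef]; linear_combination -Fu
  have E2z : Mz * (2:ℤ)^(n-A) =
      ((2:ℤ)^n - 2^(n-A)) + (2:ℤ)^(n+1) * ((2:ℤ)^(n-A) - 1) := by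
    rw [hMzdef]; linear_combination -Fh - F2e
  have E3z : Mz * (-(2:ℤ)^(n-A+1)) =
      (2:ℤ)^(n-A+1) + (2:ℤ)^(n+1) * (1 - (2:ℤ)^(n-A+1)) := by
    rw [hMzdef]; linear_combination Fu
  have E4z : Mz * ((2:ℤ)^n - 2^(n-A)) =
      (2:ℤ)^(n-A) + (2:ℤ)^(n+1) * ((2:ℤ)^n - 2^(n-A) - 2^(A-1)) := by
    rw [hMzdef]; linear_combination Fh - (2:ℤ)^(A-1) * F2e + (2:ℤ)^n * FA
  -- the ideal
  set g : R := ζ ^ (2 ^ (n - A + 1)) + (δ : R) * ζ ^ (2 ^ (n - A)) - 1 with hgdef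
  set I : Ideal R := Ideal.span {(p : R), g} with hIdef
  have hpI : (p : R) ∈ I := Ideal.subset_span (by left; rfl)
  have hgI : g ∈ I := Ideal.subset_span (by right; rfl)
  -- cast lemmas for c
  have hcastu : ((2^(n-A+1) : ℕ) : ℤ) = (2:ℤ)^(n-A+1) := by push_cast; ring
  have hcasth : ((2^(n-A) : ℕ) : ℤ) = (2:ℤ)^(n-A) := by push_cast; ring
  have hcaste : ((2^n : ℕ) : ℤ) = (2:ℤ)^n := by push_cast; ring
  have hgc : g = c ((2:ℤ)^(n-A+1)) + (δ : R) * c ((2:ℤ)^(n-A)) - 1 := by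
    rw [hgdef, ← hcastu, ← hcasth, hcnat, hcnat]
  have hε : ζ ^ (2^n) = c ((2:ℤ)^n) := by rw [← hcaste, hcnat]
  -- KEY: δ(ε+1) ∈ I via the quotient ring
  have key : (δ : R) * (ζ ^ (2^n) + 1) ∈ I := by
    rw [← Ideal.Quotient.eq_zero_iff_mem]
    have hπg : Ideal.Quotient.mk I g = 0 := Ideal.Quotient.eq_zero_iff_mem.mpr hgI
    have hπp : Ideal.Quotient.mk I ((p:ℕ) : R) = 0 := Ideal.Quotient.eq_zero_iff_mem.mpr hpI
    have hp0 : ((p:ℕ) : R ⧸ I) = 0 := by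
      rw [← map_natCast (Ideal.Quotient.mk I)]; exact hπp
    rw [hgdef] at hπg
    simp only [map_sub, map_add, map_mul, map_pow, map_one, map_intCast] at hπg
    set ω : R ⧸ I := Ideal.Quotient.mk I ζ with hωdef
    set w : R ⧸ I := ω ^ (2^(n-A)) with hwdef
    have hw2 : w ^ 2 = 1 - (δ : R ⧸ I) * w := by
      rw [hwdef, ← pow_mul, hfuh]
      linear_combination hπg
    have hωN : ω ^ (2^(n+1)) = 1 := by
      rw [hωdef, ← map_pow, hζN, map_one]
    have hone : w ^ (2^(A+1)) = 1 := by
      rw [hwdef, ← pow_mul, hfz, hωN]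
    have hεw : Ideal.Quotient.mk I (ζ ^ (2^n)) = w ^ (2^A) := by
      rw [map_pow, ← hωdef, hwdef, ← pow_mul, hfh2]
    have hid := lucasY_id δ w hw2 (A-1)
    rw [show A - 1 + 1 = A by omega, show A - 1 + 2 = A + 1 by omega] at hid
    have hsq : (w ^ (2^A))^2 = 1 := by
      rw [← pow_mul, show (2:ℕ)^A * 2 = 2^(A+1) from by rw [pow_succ], hone]
    have hVE : ((lucasY δ (A-1) : ℤ) : R ⧸ I) * w ^ (2^A) = 2 := by
      rw [hid, hone]; ring
    have hV2 : ((lucasY δ (A-1) : ℤ) : R ⧸ I)^2 = 4 := by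
      linear_combination (-(((lucasY δ (A-1) : ℤ) : R ⧸ I))^2) * hsq +
        (((lucasY δ (A-1) : ℤ) : R ⧸ I) * w ^ (2^A) + 2) * hVE
    have hVQ : ((lucasY δ (A-1) : ℤ) : R ⧸ I) = 2 * w ^ (2^A) := by
      linear_combination (-(((lucasY δ (A-1) : ℤ) : R ⧸ I))) * hsq + (w ^ (2^A)) * hVE
    obtain ⟨a, b, hab⟩ := num_core p A hp hpmod hA δ hA1
    have habQ : (δ : R ⧸ I) * (((lucasY δ (A-1) : ℤ) : R ⧸ I) + 2) = 0 := by
      have h2 := congrArg (fun t : ℤ => ((t : ℤ) : R ⧸ I)) hab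
      push_cast at h2
      rw [hp0] at h2
      linear_combination h2 + ((b : ℤ) : R ⧸ I) * hV2
    have h2d : (2 : R ⧸ I) * ((δ : R ⧸ I) * (w ^ (2^A) + 1)) = 0 := by
      linear_combination habQ - (δ : R ⧸ I) * hVQ
    obtain ⟨m, hmp⟩ : ∃ m : ℕ, p = 2*m+1 := ⟨p/2, by omega⟩
    have hpm : ((p:ℕ) : R ⧸ I) = 2 * (m : R ⧸ I) + 1 := by
      rw [hmp]; push_cast; ring
    rw [hpm] at hp0
    simp only [map_mul, map_add, map_one, map_intCast, hεw]
    linear_combination (-(m : R ⧸ I)) * h2d + ((δ : R ⧸ I) * (w ^ (2^A) + 1)) * hp0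
  -- σ(g) and its preimage partner
  have hσg_val : σ g = c (-(2:ℤ)^(n-A+1)) + (δ : R) * c ((2:ℤ)^n - (2:ℤ)^(n-A)) - 1 := by
    rw [hgc, map_sub, map_add, map_mul, map_intCast, map_one, msig, msig, E1z, E2z, hcN, hcN]
  set GG : R := c (-(2:ℤ)^(n-A+1)) + (δ : R) * c ((2:ℤ)^n - (2:ℤ)^(n-A)) - 1 with hGGdef
  have e5 : c ((2:ℤ)^(n-A+1)) * c (-(2:ℤ)^(n-A+1)) = 1 := by
    rw [← hcadd, add_neg_cancel]
    simp [hcdef]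
  have e6 : c ((2:ℤ)^(n-A+1)) * c ((2:ℤ)^n - (2:ℤ)^(n-A)) = c ((2:ℤ)^n) * c ((2:ℤ)^(n-A)) := by
    rw [← hcadd, ← hcadd]
    congr 1
    linear_combination Fuh
  have hmul : c ((2:ℤ)^(n-A+1)) * GG = -g + ((δ : R) * (ζ ^ (2^n) + 1)) * c ((2:ℤ)^(n-A)) := by
    rw [hGGdef, hgc, hε]
    linear_combination e5 + (δ : R) * e6
  have hGI : GG ∈ I := by
    have h1 : c ((2:ℤ)^(n-A+1)) * GG ∈ I := by
      rw [hmul]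
      exact I.add_mem (I.neg_mem hgI) (I.mul_mem_right _ key)
    have h2 : GG = c (-(2:ℤ)^(n-A+1)) * (c ((2:ℤ)^(n-A+1)) * GG) := by
      rw [← mul_assoc, ← hcadd, neg_add_cancel]
      simp [hcdef]
    rw [h2]
    exact I.mul_mem_left _ h1
  have hσG : σ GG = g := by
    rw [hGGdef, map_sub, map_add, map_mul, map_intCast, map_one, msig, msig, E3z, E4z,
      hcN, hcN, ← hgc]
  have hσp : σ ((p:ℕ) : R) = ((p:ℕ) : R) := map_natCast σ p
  -- conclusion
  apply le_antisymm
  · rw [hIdef, Ideal.map_span]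
    refine Ideal.span_le.mpr ?_
    rintro x hx
    simp only [Set.image_insert_eq, Set.image_singleton, Set.mem_insert_iff,
      Set.mem_singleton_iff] at hx
    rcases hx with rfl | rfl
    · show (σ : R →+* R) ((p:ℕ) : R) ∈ (I : Ideal R)
      simpa [hσp] using hpI
    · show (σ : R →+* R) g ∈ (I : Ideal R)
      have : (σ : R →+* R) g = σ g := rfl
      rw [this, hσg_val]
      exact hGI
  · refine Ideal.span_le.mpr ?_
    rintro x hx
    simp only [Set.mem_insert_iff, Set.mem_singleton_iff] at hx
    rcases hx with rfl | rfl
    · have h1 := Ideal.mem_map_of_mem (σ : R →+* R) hpI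
      have h2 : (σ : R →+* R) ((p:ℕ) : R) = ((p:ℕ) : R) := hσp
      rwa [h2] at h1
    · have h1 := Ideal.mem_map_of_mem (σ : R →+* R) hGI
      have h2 : (σ : R →+* R) GG = g := hσG
      rwa [h2] at h1
end

section
/- Let ζ be a primitive 2^(n+1)-th root of unity with n ≥ 2. Then ζ is a root of x² − (ζ − ζ^(−1))x − 1 over the subfield ℚ(ζ − ζ^(−1)), and ℚ(ζ − ζ^(−1)) is fixed by the automorphism ζ ↦ −ζ^(−1), so [ℚ(ζ) : ℚ(ζ − ζ^(−1))] = 2. -/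
open IntermediateField Polynomial


/-- Let `ζ` be a primitive `2^(n+1)`-th root of unity with `n ≥ 2`. Then `ζ` is a root of
`x² - (ζ - ζ⁻¹)x - 1` over `ℚ(ζ - ζ⁻¹)`, the subfield `ℚ(ζ - ζ⁻¹)` is fixed by the
automorphism `ζ ↦ -ζ⁻¹`, and `[ℚ(ζ) : ℚ(ζ - ζ⁻¹)] = 2`. -/
theorem stmt_14 (n : ℕ) (hn : 2 ≤ n) (ζ : CyclotomicField (2 ^ (n + 1)) ℚ)
    (hζ : IsPrimitiveRoot ζ (2 ^ (n + 1))) :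
    ζ ^ 2 - (ζ - ζ⁻¹) * ζ - 1 = 0 ∧
      (∀ σ : CyclotomicField (2 ^ (n + 1)) ℚ ≃ₐ[ℚ] CyclotomicField (2 ^ (n + 1)) ℚ,
        σ ζ = -ζ⁻¹ → ∀ x ∈ IntermediateField.adjoin ℚ {ζ - ζ⁻¹}, σ x = x) ∧
      Module.finrank (IntermediateField.adjoin ℚ {ζ - ζ⁻¹})
        (CyclotomicField (2 ^ (n + 1)) ℚ) = 2 := by
  have hNcast : ((2 ^ (n + 1) : ℕ+) : ℕ) = 2 ^ (n + 1) := by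
    push_cast; rfl
  have hζp : IsPrimitiveRoot ζ (2 ^ (n + 1)) := hζ
  have hζ0 : ζ ≠ 0 := hζ.ne_zero (by positivity)
  have hinv : ζ⁻¹ * ζ = 1 := inv_mul_cancel₀ hζ0
  have part1 : ζ ^ 2 - (ζ - ζ⁻¹) * ζ - 1 = 0 := by linear_combination hinv
  have part2 : ∀ σ : CyclotomicField (2 ^ (n + 1)) ℚ ≃ₐ[ℚ] CyclotomicField (2 ^ (n + 1)) ℚ,
      σ ζ = -ζ⁻¹ → ∀ x ∈ IntermediateField.adjoin ℚ {ζ - ζ⁻¹}, σ x = x := by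
    intro σ hσ x hx
    have key : σ (ζ - ζ⁻¹) = ζ - ζ⁻¹ := by
      rw [map_sub, hσ, map_inv₀, hσ]
      rw [inv_neg, inv_inv]
      ring
    induction hx using IntermediateField.adjoin_induction with
    | mem x hx => rw [Set.mem_singleton_iff] at hx; rw [hx]; exact key
    | algebraMap x => exact σ.commutes x
    | add x y hx hy ihx ihy => rw [map_add, ihx, ihy]
    | inv x hx ihx => rw [map_inv₀, ihx]
    | mul x y hx hy ihx ihy => rw [map_mul, ihx, ihy]
  refine ⟨part1, part2, ?_⟩
  have hpow : ζ ^ (2 ^ n : ℕ) = -1 := by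
    have h2 : IsPrimitiveRoot (ζ ^ (2 ^ n : ℕ)) 2 :=
      hζ.pow (by positivity) (by ring)
    exact h2.eq_neg_one_of_two_right
  have hneg : -ζ⁻¹ = ζ ^ (2 ^ n - 1 : ℕ) := by
    have hk : ζ ^ (2 ^ n - 1 : ℕ) * ζ = -1 := by
      rw [← pow_succ, Nat.sub_add_cancel Nat.one_le_two_pow, hpow]
    field_simp
    linear_combination -hk
  have hcop : Nat.Coprime (2 ^ n - 1) (2 ^ (n + 1)) := by
    refine Nat.Coprime.pow_right _ ?_
    refine Odd.coprime_two_right ?_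
    refine Nat.Even.sub_odd Nat.one_le_two_pow ?_ odd_one
    exact (Nat.even_pow' (by omega)).mpr even_two
  have hζ' : IsPrimitiveRoot (ζ ^ (2 ^ n - 1 : ℕ)) (2 ^ (n + 1)) :=
    hζ.pow_of_coprime _ hcop
  have hζ'p : IsPrimitiveRoot (ζ ^ (2 ^ n - 1 : ℕ)) (2 ^ (n + 1)) := hζ'
  have hirr : Irreducible (cyclotomic (2 ^ (n + 1) : ℕ) ℚ) :=
    cyclotomic.irreducible_rat (by positivity)
  haveI : NeZero ((2 ^ (n + 1) : ℕ) : ℚ) := ⟨by positivity⟩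
  haveI : NeZero (2 ^ (n + 1) : ℕ) := ⟨by positivity⟩
  haveI : IsCyclotomicExtension {2 ^ (n + 1)} ℚ (CyclotomicField (2 ^ (n + 1)) ℚ) :=
    CyclotomicField.isCyclotomicExtension (2 ^ (n + 1)) ℚ
  have hminp : minpoly ℚ ζ = minpoly ℚ (ζ ^ (2 ^ n - 1 : ℕ)) := by
    rw [← hζ.minpoly_eq_cyclotomic_of_irreducible hirr,
      ← hζ'.minpoly_eq_cyclotomic_of_irreducible hirr]
  have hmeq : (hζp.powerBasis ℚ).gen = (hζ'p.powerBasis ℚ).gen ∨ True := Or.inr trivial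
  have hminp' : minpoly ℚ (hζp.powerBasis ℚ).gen = minpoly ℚ (hζ'p.powerBasis ℚ).gen := by
    simp only [IsPrimitiveRoot.powerBasis_gen]; exact hminp
  set σ₀ := (hζp.powerBasis ℚ).equivOfMinpoly (hζ'p.powerBasis ℚ) hminp' with hσ₀def
  have hσ₀ : σ₀ ζ = -ζ⁻¹ := by
    have h := (hζp.powerBasis ℚ).equivOfMinpoly_gen (hζ'p.powerBasis ℚ) hminp'
    simp only [IsPrimitiveRoot.powerBasis_gen] at h
    rw [hσ₀def, h, hneg]
  set F := IntermediateField.adjoin ℚ {ζ - ζ⁻¹} with hF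
  have hζnotF : ζ ∉ F := by
    intro h
    have heq := part2 σ₀ hσ₀ ζ h
    rw [hσ₀] at heq
    have hζ2 : ζ ^ 2 = -1 := by
      have := congrArg (· * ζ) heq
      simp only [neg_mul, inv_mul_cancel₀ hζ0] at this
      linear_combination -this
    have h4 : ζ ^ 4 = 1 := by
      calc ζ ^ 4 = (ζ ^ 2) ^ 2 := by ring
        _ = 1 := by rw [hζ2]; ring
    have hdvd := hζ.dvd_of_pow_eq_one 4 h4
    have h8 : (2 : ℕ) ^ (n + 1) ≤ 4 := Nat.le_of_dvd (by norm_num) hdvd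
    have : (2 : ℕ) ^ 3 ≤ 2 ^ (n + 1) := Nat.pow_le_pow_right (by norm_num) (by omega)
    omega
  haveI : FiniteDimensional ℚ (CyclotomicField (2 ^ (n + 1)) ℚ) :=
    IsCyclotomicExtension.finiteDimensional {2 ^ (n + 1)} ℚ _
  haveI : FiniteDimensional F (CyclotomicField (2 ^ (n + 1)) ℚ) :=
    FiniteDimensional.right ℚ F _
  have hint : IsIntegral F ζ := Algebra.IsIntegral.isIntegral ζ
  have htop : IntermediateField.adjoin F {ζ} = ⊤ := by
    apply IntermediateField.adjoin_eq_top_of_adjoin_eq_top ℚ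
    rw [eq_top_iff]
    intro x _
    have hat : Algebra.adjoin ℚ ({ζ} : Set (CyclotomicField (2 ^ (n + 1)) ℚ)) = ⊤ :=
      IsCyclotomicExtension.adjoin_primitive_root_eq_top hζp
    exact IntermediateField.algebra_adjoin_le_adjoin ℚ {ζ} (hat ▸ Algebra.mem_top)
  have hfr : Module.finrank F (CyclotomicField (2 ^ (n + 1)) ℚ) = (minpoly F ζ).natDegree := by
    rw [← IntermediateField.adjoin.finrank hint, htop, IntermediateField.finrank_top']
  rw [hfr]
  set a : F := ⟨ζ - ζ⁻¹, IntermediateField.mem_adjoin_simple_self ℚ _⟩ with ha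
  have hle : (minpoly F ζ).natDegree ≤ 2 := by
    have hmonic : (X ^ 2 - C a * X - 1 : F[X]).Monic := by
      have heq2 : (X ^ 2 - C a * X - 1 : F[X]) = X ^ 2 + (-(C a * X) - C 1) := by
        simp only [map_one]; ring
      rw [heq2]
      apply monic_X_pow_add
      apply lt_of_le_of_lt (b := (1 : WithBot ℕ))
      · compute_degree
      · norm_num
    have haev : Polynomial.aeval ζ (X ^ 2 - C a * X - 1 : F[X]) = 0 := by
      simp only [map_sub, map_pow, map_one, map_mul, aeval_X, aeval_C]
      have : (algebraMap F (CyclotomicField (2 ^ (n + 1)) ℚ)) a = ζ - ζ⁻¹ := rfl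
      rw [this]
      exact part1
    have := minpoly.min F ζ hmonic haev
    have hdeg : (X ^ 2 - C a * X - 1 : F[X]).natDegree = 2 := by
      compute_degree!
    calc (minpoly F ζ).natDegree ≤ (X ^ 2 - C a * X - 1 : F[X]).natDegree :=
          Polynomial.natDegree_le_natDegree this
      _ = 2 := hdeg
  have hge : 2 ≤ (minpoly F ζ).natDegree := by
    rw [minpoly.two_le_natDegree_iff hint]
    rintro ⟨y, hy⟩
    exact hζnotF (hy ▸ y.2)
  omega
end

section
/- Let N = 2^n, ζ a primitive 2N-th root of unity, p an odd prime, f(x) an irreducible factor of x^N + 1 mod p of degree N/2^r = 2^(n−r) (a lift of it to ℤ[x]), and 𝔭 = (p, f(ζ)) ⊂ ℤ[ζ]. Suppose f(x) is a polynomial in x^(2^(n−r)). Then with K = ℚ(ζ^(2^(n−r))) and 𝔠 = 𝔭 ∩ O_K, the ideal 𝔭 decomposes as a direct sum of ℤ-modules: 𝔭 = ⊕_{k=0}^{2^(n−r)−1} ζ^k 𝔠. -/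
open Polynomial


lemma my_decomp {A : Type*} [CommRing A] (m T : ℕ) (q : ℤ[X]) (hq : q.natDegree < T * m)
    (x : A) :
    aeval x q = ∑ k : Fin m, x ^ (k : ℕ) *
      aeval (x ^ m) (∑ j ∈ Finset.range T, C (q.coeff (k + m * j)) * X ^ j) := by
  rw [aeval_eq_sum_range' hq, ← Fin.sum_univ_eq_sum_range,
    ← Equiv.sum_comp (finProdFinEquiv : Fin T × Fin m ≃ Fin (T * m))
      (fun i : Fin (T * m) => q.coeff i • x ^ (i : ℕ)),
    Fintype.sum_prod_type, Finset.sum_comm]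
  refine Finset.sum_congr rfl fun k _ => ?_
  rw [map_sum, Finset.mul_sum, ← Fin.sum_univ_eq_sum_range
    (fun j => x ^ (k : ℕ) * aeval (x ^ m) (C (q.coeff (k + m * j)) * X ^ j))]
  refine Finset.sum_congr rfl fun j _ => ?_
  simp only [finProdFinEquiv_apply_val, map_mul, aeval_C, aeval_X_pow]
  rw [Algebra.smul_def, pow_add, pow_mul]
  ring

lemma my_split (m : ℕ) (hm : 0 < m) {Kf : Type*} [Field Kf] [Algebra ℚ Kf] {ζ : Kf}
    (u : Algebra.adjoin ℤ ({ζ} : Set Kf)) :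
    ∃ w : Fin m → Algebra.adjoin ℤ ({ζ} : Set Kf),
      (∀ k, ((w k : Kf) ∈ Algebra.adjoin ℤ ({ζ ^ m} : Set Kf))) ∧
      (u : Kf) = ∑ k : Fin m, ζ ^ (k : ℕ) * (w k : Kf) := by
  obtain ⟨q, hq⟩ : ∃ q : ℤ[X], aeval ζ q = (u : Kf) := by
    have hu : (u : Kf) ∈ (aeval ζ : ℤ[X] →ₐ[ℤ] Kf).range := by
      rw [← Algebra.adjoin_singleton_eq_range_aeval]; exact u.2
    exact hu
  have hdeg : q.natDegree < (q.natDegree + 1) * m :=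
    lt_of_lt_of_le (Nat.lt_succ_self _) (Nat.le_mul_of_pos_right _ hm)
  have hle : Algebra.adjoin ℤ ({ζ ^ m} : Set Kf) ≤ Algebra.adjoin ℤ ({ζ} : Set Kf) :=
    Algebra.adjoin_le (Set.singleton_subset_iff.mpr
      (pow_mem (Algebra.self_mem_adjoin_singleton ℤ ζ) m))
  have hmem : ∀ k : Fin m, aeval (ζ ^ m)
      (∑ j ∈ Finset.range (q.natDegree + 1), C (q.coeff (k + m * j)) * X ^ j)
      ∈ Algebra.adjoin ℤ ({ζ ^ m} : Set Kf) := by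
    intro k
    rw [Algebra.adjoin_singleton_eq_range_aeval, AlgHom.mem_range]
    exact ⟨_, rfl⟩
  refine ⟨fun k => ⟨_, hle (hmem k)⟩, fun k => hmem k, ?_⟩
  rw [← hq, my_decomp m (q.natDegree + 1) q hdeg ζ]


lemma my_indep (n r : ℕ) (hr : r ≤ n) {Kf : Type*} [Field Kf] [inst : Algebra ℚ Kf] {ζ : Kf}
    (hζ : IsPrimitiveRoot ζ (2 ^ (n + 1))) (d : Fin (2 ^ (n - r)) → Kf)
    (hd : ∀ k, d k ∈ Algebra.adjoin ℤ ({ζ ^ (2 ^ (n - r))} : Set Kf))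
    (hsum : ∑ k : Fin (2 ^ (n - r)), ζ ^ (k : ℕ) * d k = 0) : ∀ k, d k = 0 := by
  haveI : CharZero Kf := charZero_of_injective_algebraMap (algebraMap ℚ Kf).injective
  have hmul : 2 ^ (n + 1) = 2 ^ (n - r) * 2 ^ (r + 1) := by
    rw [← pow_add]; congr 1; omega
  have hζm : IsPrimitiveRoot (ζ ^ (2 ^ (n - r))) (2 ^ (r + 1)) := hζ.pow (by positivity) hmul
  have hintμ : IsIntegral ℚ (ζ ^ (2 ^ (n - r))) :=
    ⟨X ^ (2 ^ (r + 1)) - 1, monic_X_pow_sub_C 1 (by positivity),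
      by simp [hζm.pow_eq_one]⟩
  have hdegμ : (minpoly ℚ (ζ ^ (2 ^ (n - r)))).natDegree = 2 ^ r := by
    rw [Subsingleton.elim inst DivisionRing.toRatAlgebra,
      ← cyclotomic_eq_minpoly_rat hζm (by positivity), natDegree_cyclotomic,
      Nat.totient_prime_pow Nat.prime_two (by omega)]
    simp
  have hdegζ : (minpoly ℚ ζ).natDegree = 2 ^ n := by
    rw [Subsingleton.elim inst DivisionRing.toRatAlgebra,
      ← cyclotomic_eq_minpoly_rat hζ (by positivity), natDegree_cyclotomic,
      Nat.totient_prime_pow Nat.prime_two (by omega)]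
    simp
  have hrep : ∀ k, ∃ h : ℚ[X], h.natDegree < 2 ^ r ∧ aeval (ζ ^ (2 ^ (n - r))) h = d k := by
    intro k
    have h0 := hd k
    rw [Algebra.adjoin_singleton_eq_range_aeval, AlgHom.mem_range] at h0
    obtain ⟨g, hg⟩ := h0
    refine ⟨(g.map (algebraMap ℤ ℚ)) %ₘ minpoly ℚ (ζ ^ (2 ^ (n - r))), ?_, ?_⟩
    · have h1 : (minpoly ℚ (ζ ^ (2 ^ (n - r)))).Monic := minpoly.monic hintμ
      have h2 := natDegree_modByMonic_lt (g.map (algebraMap ℤ ℚ)) h1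
        (fun h0 => by
          rw [h0, natDegree_one] at hdegμ
          exact absurd hdegμ.symm (pow_pos (by norm_num) r).ne')
      omega
    · rw [aeval_modByMonic_eq_self_of_root
        (minpoly.aeval ℚ (ζ ^ (2 ^ (n - r)))), aeval_map_algebraMap, hg]
  choose h hhdeg hhval using hrep
  have hEq : 2 ^ r * 2 ^ (n - r) = (minpoly ℚ ζ).natDegree := by
    rw [hdegζ, ← pow_add]; congr 1; omega
  let e' : Fin (2 ^ r) × Fin (2 ^ (n - r)) ≃ Fin (minpoly ℚ ζ).natDegree :=
    finProdFinEquiv.trans (finCongr hEq)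
  let E : Fin (minpoly ℚ ζ).natDegree → ℚ := fun i => (h (e'.symm i).2).coeff (e'.symm i).1
  have hzero : ∀ i, E i = 0 := by
    refine Fintype.linearIndependent_iff.mp (linearIndependent_pow (K := ℚ) ζ) E ?_
    have h1 : ∑ i : Fin (minpoly ℚ ζ).natDegree, E i • ζ ^ (i : ℕ)
        = ∑ jk : Fin (2 ^ r) × Fin (2 ^ (n - r)), E (e' jk) • ζ ^ ((e' jk : Fin _) : ℕ) :=
      (Equiv.sum_comp e' (fun i : Fin (minpoly ℚ ζ).natDegree => E i • ζ ^ (i : ℕ))).symm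
    rw [h1]
    have h2 : ∀ jk : Fin (2 ^ r) × Fin (2 ^ (n - r)),
        E (e' jk) • ζ ^ ((e' jk : Fin _) : ℕ)
          = (h jk.2).coeff jk.1 • (ζ ^ (jk.2 : ℕ) * (ζ ^ (2 ^ (n - r))) ^ (jk.1 : ℕ)) := by
      intro jk
      have hv : ((e' jk : Fin _) : ℕ) = (jk.2 : ℕ) + 2 ^ (n - r) * (jk.1 : ℕ) := by
        simp [e', finProdFinEquiv_apply_val]
      rw [hv]
      congr 1
      · simp only [E]
        rw [Equiv.symm_apply_apply]
      · rw [pow_add, pow_mul]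
    rw [Finset.sum_congr rfl fun jk _ => h2 jk, Fintype.sum_prod_type, Finset.sum_comm]
    have h3 : ∀ k : Fin (2 ^ (n - r)),
        ∑ j : Fin (2 ^ r), (h k).coeff (j : ℕ) • (ζ ^ (k : ℕ) * (ζ ^ (2 ^ (n - r))) ^ (j : ℕ))
        = ζ ^ (k : ℕ) * d k := by
      intro k
      rw [← hhval k, aeval_eq_sum_range' (hhdeg k), ← Fin.sum_univ_eq_sum_range
        (fun j => (h k).coeff j • (ζ ^ (2 ^ (n - r))) ^ j), Finset.mul_sum]
      exact Finset.sum_congr rfl fun j _ => by rw [mul_smul_comm]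
    rw [Finset.sum_congr rfl fun k _ => h3 k, hsum]
  intro k
  rw [← hhval k]
  have hk0 : h k = 0 := by
    ext j
    rcases lt_or_ge j (2 ^ r) with hj | hj
    · have h5 := hzero (e' (⟨j, hj⟩, k))
      simp only [E] at h5
      rw [Equiv.symm_apply_apply] at h5
      exact h5
    · exact coeff_eq_zero_of_natDegree_lt (lt_of_lt_of_le (hhdeg k) hj)
  simp [hk0]

/-- Let `N = 2^n`, `ζ` a primitive `2N`-th root of unity, `p` an odd prime, `f ∈ ℤ[x]` a lift
of an irreducible factor of `x^N + 1 mod p` of degree `2^(n-r)` which is a polynomial in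
`x^(2^(n-r))`, and `𝔭 = (p, f(ζ)) ⊆ ℤ[ζ]`. With `K = ℚ(ζ^(2^(n-r)))`, `O_K = ℤ[ζ^(2^(n-r))]`
and `𝔠 = 𝔭 ∩ O_K`, the ideal `𝔭` is the internal direct sum `⊕_{k<2^(n-r)} ζ^k 𝔠` of
`ℤ`-modules: every `a ∈ 𝔭` is uniquely a sum `Σ_k ζ^k a⁽ᵏ⁾` with `a⁽ᵏ⁾ ∈ 𝔠`. -/
theorem stmt_18 (n r : ℕ) (hr : r ≤ n) (p : ℕ) (hp : p.Prime) (hodd : Odd p)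
    (f : ℤ[X])
    (hirr : Irreducible (f.map (Int.castRingHom (ZMod p))))
    (hdiv : f.map (Int.castRingHom (ZMod p)) ∣ X ^ (2 ^ n) + 1)
    (hdeg : f.natDegree = 2 ^ (n - r))
    (hcomp : ∃ g : ℤ[X], f = g.comp (X ^ (2 ^ (n - r))))
    (Kf : Type*) [Field Kf] [Algebra ℚ Kf] (ζ : Kf)
    (hζ : IsPrimitiveRoot ζ (2 ^ (n + 1))) :
    ∀ zR : Algebra.adjoin ℤ ({ζ} : Set Kf), (zR : Kf) = ζ →
      ∀ 𝔭 : Ideal (Algebra.adjoin ℤ ({ζ} : Set Kf)),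
        𝔭 = Ideal.span {((p : Algebra.adjoin ℤ ({ζ} : Set Kf))), aeval zR f} →
        ∀ a : Algebra.adjoin ℤ ({ζ} : Set Kf),
          a ∈ 𝔭 ↔
            ∃! c : Fin (2 ^ (n - r)) → Algebra.adjoin ℤ ({ζ} : Set Kf),
              (∀ k, c k ∈ 𝔭 ∧ ((c k : Kf) ∈ Algebra.adjoin ℤ ({ζ ^ (2 ^ (n - r))} : Set Kf))) ∧
                a = ∑ k : Fin (2 ^ (n - r)), zR ^ (k : ℕ) * c k := by
  intro zR hzR 𝔭 h𝔭 a
  letI R := Algebra.adjoin ℤ ({ζ} : Set Kf)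
  obtain ⟨g, hg⟩ := hcomp
  have hm : (0:ℕ) < 2 ^ (n - r) := by positivity
  -- the coercion R → Kf as an algebra hom
  have hcoe_sum : ∀ (c : Fin (2 ^ (n - r)) → R),
      ((∑ k : Fin (2 ^ (n - r)), zR ^ (k : ℕ) * c k : R) : Kf)
        = ∑ k : Fin (2 ^ (n - r)), ζ ^ (k : ℕ) * ((c k : R) : Kf) := by
    intro c
    push_cast [← hzR]
    rfl
  have hfζ : ((aeval zR f : R) : Kf) = aeval (ζ ^ 2 ^ (n - r)) g := by
    have h1 : ((aeval zR f : R) : Kf) = aeval ((zR : Kf)) f :=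
      (aeval_algHom_apply (Subalgebra.val R) zR f).symm
    rw [h1, hzR, hg, aeval_comp, aeval_X_pow]
  have hfmem : ((aeval zR f : R) : Kf) ∈ Algebra.adjoin ℤ ({ζ ^ (2 ^ (n - r))} : Set Kf) := by
    rw [hfζ, Algebra.adjoin_singleton_eq_range_aeval, AlgHom.mem_range]
    exact ⟨g, rfl⟩
  have hpmem : (((p : R) : Kf)) ∈ Algebra.adjoin ℤ ({ζ ^ (2 ^ (n - r))} : Set Kf) := by
    push_cast
    exact Subalgebra.natCast_mem _ p
  -- uniqueness of decompositions
  have key : ∀ c₁ c₂ : Fin (2 ^ (n - r)) → R,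
      ((∀ k, c₁ k ∈ 𝔭 ∧ ((c₁ k : Kf) ∈ Algebra.adjoin ℤ ({ζ ^ (2 ^ (n - r))} : Set Kf))) ∧
        a = ∑ k : Fin (2 ^ (n - r)), zR ^ (k : ℕ) * c₁ k) →
      ((∀ k, c₂ k ∈ 𝔭 ∧ ((c₂ k : Kf) ∈ Algebra.adjoin ℤ ({ζ ^ (2 ^ (n - r))} : Set Kf))) ∧
        a = ∑ k : Fin (2 ^ (n - r)), zR ^ (k : ℕ) * c₂ k) → c₁ = c₂ := by
    rintro c₁ c₂ ⟨h₁, e₁⟩ ⟨h₂, e₂⟩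
    have esum : ∑ k : Fin (2 ^ (n - r)), ζ ^ (k : ℕ) * ((c₁ k : Kf) - (c₂ k : Kf)) = 0 := by
      have e3 : ((∑ k : Fin (2 ^ (n - r)), zR ^ (k : ℕ) * c₁ k : R) : Kf)
          = ((∑ k : Fin (2 ^ (n - r)), zR ^ (k : ℕ) * c₂ k : R) : Kf) := by
        rw [← e₁, ← e₂]
      rw [hcoe_sum, hcoe_sum] at e3
      simp [mul_sub, Finset.sum_sub_distrib, e3]
    have hz := my_indep n r hr hζ (fun k => (c₁ k : Kf) - (c₂ k : Kf))
      (fun k => sub_mem (h₁ k).2 (h₂ k).2) esum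
    funext k
    exact Subtype.coe_injective (sub_eq_zero.mp (hz k))
  constructor
  · intro ha
    rw [h𝔭, Ideal.mem_span_pair] at ha
    obtain ⟨u, v, huv⟩ := ha
    obtain ⟨wu, hwu, hwu2⟩ := my_split (2 ^ (n - r)) hm u
    obtain ⟨wv, hwv, hwv2⟩ := my_split (2 ^ (n - r)) hm v
    have h1 : ∀ k : Fin (2 ^ (n - r)),
        (wu k * (p : Algebra.adjoin ℤ ({ζ} : Set Kf)) + wv k * aeval zR f) ∈ 𝔭 ∧
        ((wu k * (p : Algebra.adjoin ℤ ({ζ} : Set Kf)) + wv k * aeval zR f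
          : Algebra.adjoin ℤ ({ζ} : Set Kf)) : Kf)
          ∈ Algebra.adjoin ℤ ({ζ ^ (2 ^ (n - r))} : Set Kf) := by
      intro k
      constructor
      · rw [h𝔭, Ideal.mem_span_pair]; exact ⟨wu k, wv k, rfl⟩
      · simp only [Subalgebra.coe_add, Subalgebra.coe_mul]
        exact add_mem (mul_mem (hwu k) hpmem) (mul_mem (hwv k) hfmem)
    have h2 : a = ∑ k : Fin (2 ^ (n - r)), zR ^ (k : ℕ) *
        (wu k * (p : Algebra.adjoin ℤ ({ζ} : Set Kf)) + wv k * aeval zR f) := by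
      apply Subtype.coe_injective
      beta_reduce
      rw [hcoe_sum]
      have ha' : (u : Kf) * (((p : Algebra.adjoin ℤ ({ζ} : Set Kf))) : Kf)
          + (v : Kf) * ((aeval zR f : Algebra.adjoin ℤ ({ζ} : Set Kf)) : Kf) = (a : Kf) := by
        rw [← huv]; simp only [Subalgebra.coe_add, Subalgebra.coe_mul]
      rw [← ha', hwu2, hwv2, Finset.sum_mul, Finset.sum_mul, ← Finset.sum_add_distrib]
      refine Finset.sum_congr rfl fun k _ => ?_
      simp only [Subalgebra.coe_add, Subalgebra.coe_mul]
      ring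
    exact ⟨_, ⟨h1, h2⟩, fun y hy => key y _ hy ⟨h1, h2⟩⟩
  · rintro ⟨c, ⟨hc, rfl⟩, -⟩
    exact Ideal.sum_mem _ fun k _ => Ideal.mul_mem_left _ _ (hc k).1
end
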